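/- Let n ≥ 2, let s : Fin n → ℝ, let i : Fin n, and let M ≥ 0. If s i − s j ≥ M for every j ≠ i, then the softmax weight at i satisfies exp(s i) / ∑_{k} exp(s k) ≥ 1 / (1 + (n − 1) · exp(−M)). Consequently the sink weight tends to 1 as the uniform score gap M tends to infinity. -/
import Mathlib


open Finset

/-- Quantitative softmax saturation (Theorem B.2): if the score at `i`
dominates every other score by at least `M ≥ 0`, then the softmax weight at
`i` is at least `1 / (1 + (n - 1) * exp (-M))`. -/
theorem softmax_saturation (n : ℕ) (hn : 2 ≤ n) (s : Fin n → ℝ) (i : Fin n)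
    (M : ℝ) (hM : 0 ≤ M) (hgap : ∀ j : Fin n, j ≠ i → s i - s j ≥ M) :
    Real.exp (s i) / ∑ k, Real.exp (s k) ≥
      1 / (1 + ((n : ℝ) - 1) * Real.exp (-M)) := by
  have hSpos : 0 < ∑ k, Real.exp (s k) :=
    Finset.sum_pos (fun k _ => Real.exp_pos _) ⟨i, Finset.mem_univ i⟩
  have hDpos : 0 < 1 + ((n : ℝ) - 1) * Real.exp (-M) := by
    have h1 : (1 : ℝ) ≤ (n : ℝ) := by exact_mod_cast Nat.one_le_of_lt hn
    nlinarith [Real.exp_pos (-M)]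
  rw [ge_iff_le, div_le_div_iff₀ hDpos hSpos, one_mul]
  have hsplit : ∑ k, Real.exp (s k)
      = Real.exp (s i) + ∑ j ∈ univ.erase i, Real.exp (s j) := by
    rw [← Finset.add_sum_erase _ _ (Finset.mem_univ i)]
  have hbound : ∑ j ∈ univ.erase i, Real.exp (s j)
      ≤ ((n : ℝ) - 1) * (Real.exp (s i) * Real.exp (-M)) := by
    calc ∑ j ∈ univ.erase i, Real.exp (s j)
        ≤ ∑ _j ∈ univ.erase i, Real.exp (s i) * Real.exp (-M) := by
          apply Finset.sum_le_sum
          intro j hj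
          rw [← Real.exp_add]
          apply Real.exp_le_exp.mpr
          have := hgap j (Finset.mem_erase.mp hj).1
          linarith
      _ = ((n : ℝ) - 1) * (Real.exp (s i) * Real.exp (-M)) := by
          rw [Finset.sum_const, nsmul_eq_mul, Finset.card_erase_of_mem (Finset.mem_univ i),
            Finset.card_univ, Fintype.card_fin]
          have h1 : (1 : ℕ) ≤ n := Nat.one_le_of_lt hn
          push_cast [h1]
          ring
  rw [hsplit]
  nlinarith [Real.exp_pos (s i)]
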